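/- Let Γ be a finite p-group and θ : Γ → (𝔽_p)^n a surjective homomorphism. If ρ : Γ → U_{n+1}(ℤ/p^m) is any homomorphism satisfying φ_m ∘ ρ = θ, then ρ is surjective. -/

import Mathlib

open Matrix

/-- A matrix is upper-triangular unipotent. -/
def IsUU {R : Type*} [CommRing R] {N : ℕ} (M : Matrix (Fin N) (Fin N) R) : Prop :=
  M.BlockTriangular id ∧ ∀ i, M i i = 1

theorem diag_mul_of_triangular {R : Type*} [CommRing R] {N : ℕ}
    {A B : Matrix (Fin N) (Fin N) R} (hA : A.BlockTriangular id)
    (hB : B.BlockTriangular id) (i : Fin N) :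
    (A * B) i i = A i i * B i i := by
  rw [Matrix.mul_apply]
  refine Finset.sum_eq_single i (fun j _ hj => ?_) (fun h => absurd (Finset.mem_univ i) h)
  rcases lt_or_gt_of_ne hj with h | h
  · rw [hA h, zero_mul]
  · rw [hB h, mul_zero]

theorem IsUU.mul {R : Type*} [CommRing R] {N : ℕ} {A B : Matrix (Fin N) (Fin N) R}
    (hA : IsUU A) (hB : IsUU B) : IsUU (A * B) :=
  ⟨hA.1.mul hB.1, fun i => by
    rw [diag_mul_of_triangular hA.1 hB.1, hA.2, hB.2, one_mul]⟩

theorem IsUU.one {R : Type*} [CommRing R] {N : ℕ} : IsUU (1 : Matrix (Fin N) (Fin N) R) :=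
  ⟨Matrix.blockTriangular_one, fun i => Matrix.one_apply_eq i⟩

theorem IsUU.inv {R : Type*} [CommRing R] {N : ℕ} {A : (Matrix (Fin N) (Fin N) R)ˣ}
    (hA : IsUU (A : Matrix (Fin N) (Fin N) R)) :
    IsUU ((A⁻¹ : (Matrix (Fin N) (Fin N) R)ˣ) : Matrix (Fin N) (Fin N) R) := by
  letI := A.invertible
  have hinv : ((A⁻¹ : (Matrix (Fin N) (Fin N) R)ˣ) : Matrix (Fin N) (Fin N) R)
      = (A : Matrix (Fin N) (Fin N) R)⁻¹ := Matrix.coe_units_inv A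
  have t : ((A : Matrix (Fin N) (Fin N) R)⁻¹).BlockTriangular id :=
    Matrix.blockTriangular_inv_of_blockTriangular hA.1
  refine ⟨hinv ▸ t, fun i => ?_⟩
  have h1 : ((A : Matrix (Fin N) (Fin N) R) *
      ((A⁻¹ : (Matrix (Fin N) (Fin N) R)ˣ) : Matrix (Fin N) (Fin N) R)) i i = 1 := by
    rw [← Units.val_mul, mul_inv_cancel]
    exact Matrix.one_apply_eq i
  rw [diag_mul_of_triangular hA.1 (hinv ▸ t) i, hA.2, one_mul] at h1
  exact h1

/-- The group of upper-triangular unipotent `N × N` matrices over `R`,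
as a subgroup of the units of the matrix ring. -/
def UT (R : Type*) [CommRing R] (N : ℕ) : Subgroup (Matrix (Fin N) (Fin N) R)ˣ where
  carrier := {u | IsUU (u : Matrix (Fin N) (Fin N) R)}
  one_mem' := IsUU.one
  mul_mem' := fun {a b} ha hb => by
    show IsUU ((a * b : (Matrix (Fin N) (Fin N) R)ˣ) : Matrix (Fin N) (Fin N) R)
    rw [Units.val_mul]; exact ha.mul hb
  inv_mem' := fun {a} ha => ha.inv

/-- The `(i,j)` entry of an element of `UT R N`. -/
def UTentry {R : Type*} [CommRing R] {N : ℕ} (u : UT R N) (i j : Fin N) : R :=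
  ((u : (Matrix (Fin N) (Fin N) R)ˣ) : Matrix (Fin N) (Fin N) R) i j

/-! The superdiagonal map `φ : U_{n+1}(R) → Rⁿ` is a homomorphism. Over `ℤ/p^m` the group
`U_{n+1}` is a `p`-group, so each maximal subgroup `M` is normal of index `p` and contains all
commutators and `p`-th powers. Commutators of transvections give every transvection above the
superdiagonal, and `p`-th powers give those on it with entries in `p ℤ/p^m`; clearing the
superdiagonals one at a time writes every element of `ker φ` as a product of these, so `ker φ`
lies in the Frattini subgroup. As `φ ∘ ρ = θ` is onto, `ρ(Γ)` and the Frattini subgroup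
generate `U_{n+1}`, and hence `ρ(Γ)` alone does. -/

open scoped commutatorElement

namespace Matrix

variable {R : Type*} [Semiring R] {N : ℕ}

def IsSupportedAbove (d : ℕ) (A : Matrix (Fin N) (Fin N) R) : Prop :=
  ∀ i j : Fin N, (j : ℕ) < i + d → A i j = 0

namespace IsSupportedAbove

variable {a b d : ℕ} {A B : Matrix (Fin N) (Fin N) R}

theorem mono (h : a ≤ b) (hA : IsSupportedAbove b A) : IsSupportedAbove a A :=
  fun i j hij => hA i j (by omega)

theorem add (hA : IsSupportedAbove d A) (hB : IsSupportedAbove d B) :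
    IsSupportedAbove d (A + B) :=
  fun i j hij => by rw [add_apply, hA i j hij, hB i j hij, add_zero]

theorem mul (hA : IsSupportedAbove a A) (hB : IsSupportedAbove b B) :
    IsSupportedAbove (a + b) (A * B) := by
  intro i j hij
  rw [mul_apply]
  refine Finset.sum_eq_zero fun k _ => ?_
  by_cases hk : (k : ℕ) < i + a
  · rw [hA i k hk, zero_mul]
  · rw [hB k j (by omega), mul_zero]

theorem pow (hA : IsSupportedAbove a A) (k : ℕ) : IsSupportedAbove (a * k) (A ^ k) := by
  induction k with
  | zero => exact fun i j hij => one_apply_ne (by rintro rfl; omega)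
  | succ k ih => rw [pow_succ, Nat.mul_succ]; exact ih.mul hA

theorem eq_zero (hd : N ≤ d) (hA : IsSupportedAbove d A) : A = 0 :=
  ext fun i j => hA i j (by omega)

end IsSupportedAbove

theorem isSupportedAbove_single {d : ℕ} {i j : Fin N} (hij : (i : ℕ) + d ≤ j) (c : R) :
    IsSupportedAbove d (single i j c) :=
  fun a b hab => single_apply_of_ne _ _ _ _ _ (by rintro ⟨rfl, rfl⟩; omega)

end Matrix

theorem Nat.Prime.pow_dvd_choose_pow_add {p : ℕ} (hp : p.Prime) (m : ℕ) {n k : ℕ}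
    (hk0 : k ≠ 0) (hkn : k ≤ n) : p ^ m ∣ (p ^ (m + n)).choose k := by
  have hk : k ≤ p ^ (m + n) :=
    hkn.trans ((Nat.lt_pow_self hp.one_lt).le.trans (Nat.pow_le_pow_right hp.pos (by omega)))
  rw [hp.pow_dvd_iff_le_factorization (Nat.choose_pos hk).ne',
    Nat.factorization_choose_prime_pow hp hk hk0]
  have := Nat.factorization_lt p hk0
  omega

theorem one_add_pow_prime_pow_eq_one {A : Type*} [Ring A] {p m N : ℕ} (hp : p.Prime)
    (hA : ((p ^ m : ℕ) : A) = 0) {X : A} (hX : X ^ N = 0) : (1 + X) ^ p ^ (m + N) = 1 := by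
  rw [add_comm, (Commute.one_right X).add_pow, Finset.sum_eq_single 0]
  · simp
  · intro k _ hk
    rcases lt_or_ge k N with hkN | hkN
    · obtain ⟨c, hc⟩ := hp.pow_dvd_choose_pow_add m hk hkN.le
      rw [hc, Nat.cast_mul, hA, zero_mul, mul_zero]
    · rw [pow_eq_zero_of_le hkN hX, zero_mul, zero_mul]
  · simp

theorem QuotientGroup.isSimpleGroup_of_isCoatom {G : Type*} [Group G] {M : Subgroup G} [M.Normal]
    (hM : IsCoatom M) : IsSimpleGroup (G ⧸ M) := by
  have : IsSimpleOrder (Set.Ici M) := Set.isSimpleOrder_Ici_iff_isCoatom.mpr hM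
  have : IsSimpleOrder (Subgroup (G ⧸ M)) :=
    ((comapMk'OrderIso M).trans (OrderIso.refl (Set.Ici M))).isSimpleOrder
  have : Nontrivial (G ⧸ M) := Subgroup.nontrivial_iff.mp inferInstance
  exact ⟨fun H _ => IsSimpleOrder.eq_bot_or_eq_top H⟩

namespace IsPGroup

variable {p : ℕ} [Fact p.Prime] {G : Type*} [Group G] [Finite G] {M : Subgroup G}

theorem normal_of_isCoatom (hG : IsPGroup p G) (hM : IsCoatom M) : M.Normal :=
  have := hG.isNilpotent
  Subgroup.NormalizerCondition.normal_of_coatom M Group.normalizerCondition_of_isNilpotent hM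

theorem mul_comm_quotient_of_isCoatom (hG : IsPGroup p G) (hM : IsCoatom M) [M.Normal]
    (a b : G ⧸ M) : a * b = b * a :=
  have := QuotientGroup.isSimpleGroup_of_isCoatom hM
  have := (hG.to_quotient M).isNilpotent
  IsSimpleGroup.comm_iff_isSolvable.mpr inferInstance a b

theorem commutator_le_of_isCoatom (hG : IsPGroup p G) (hM : IsCoatom M) : commutator G ≤ M := by
  have := hG.normal_of_isCoatom hM
  rw [commutator_def, Subgroup.commutator_le]
  intro a _ b _
  rw [← QuotientGroup.eq_one_iff, ← QuotientGroup.mk'_apply, map_commutatorElement,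
    commutatorElement_eq_one_iff_mul_comm]
  exact hG.mul_comm_quotient_of_isCoatom hM _ _

theorem pow_mem_of_isCoatom (hG : IsPGroup p G) (hM : IsCoatom M) (a : G) : a ^ p ∈ M := by
  have := hG.normal_of_isCoatom hM
  have := QuotientGroup.isSimpleGroup_of_isCoatom hM
  have : IsMulCommutative (G ⧸ M) := ⟨⟨hG.mul_comm_quotient_of_isCoatom hM⟩⟩
  have hprime : (Nat.card (G ⧸ M)).Prime := Group.is_simple_iff_prime_card.mp inferInstance
  have hcard : Nat.card (G ⧸ M) = p := ((Nat.prime_dvd_prime_iff_eq Fact.out hprime).mp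
    ((hG.to_quotient M).card_eq_or_dvd.resolve_left hprime.ne_one)).symm
  rw [← QuotientGroup.eq_one_iff, QuotientGroup.mk_pow, ← hcard]
  exact pow_card_eq_one'

end IsPGroup

theorem MonoidHom.surjective_of_ker_le_frattini {Γ G H : Type*} [Group Γ] [Group G] [Group H]
    [IsCoatomic (Subgroup G)] (φ : G →* H) (ρ : Γ →* G) (hker : φ.ker ≤ frattini G)
    (hsurj : Function.Surjective (φ ∘ ρ)) : Function.Surjective ρ := by
  rw [← MonoidHom.range_eq_top]
  refine frattini_nongenerating (eq_top_iff.mpr fun g _ => ?_)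
  obtain ⟨γ, hγ⟩ := hsurj (φ g)
  have hmem : (ρ γ)⁻¹ * g ∈ φ.ker := by
    rw [MonoidHom.mem_ker, map_mul, map_inv, ← Function.comp_apply (f := φ), hγ, inv_mul_cancel]
  rw [← mul_inv_cancel_left (ρ γ) g]
  exact Subgroup.mul_mem_sup ⟨γ, rfl⟩ (hker hmem)

theorem ZMod.ker_castHom_le_span {a b : ℕ} (h : a ∣ b) :
    RingHom.ker (ZMod.castHom h (ZMod a)) ≤ Ideal.span {(a : ZMod b)} := by
  intro x hx
  obtain ⟨z, rfl⟩ := ZMod.intCast_surjective x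
  rw [RingHom.mem_ker, map_intCast, ZMod.intCast_zmod_eq_zero_iff_dvd] at hx
  obtain ⟨c, rfl⟩ := hx
  exact Ideal.mem_span_singleton'.mpr ⟨c, by push_cast; ring⟩

namespace UT

variable {R : Type*} [CommRing R] {N : ℕ}

instance : CoeOut (UT R N) (Matrix (Fin N) (Fin N) R) :=
  ⟨fun u => ((u : (Matrix (Fin N) (Fin N) R)ˣ) : Matrix (Fin N) (Fin N) R)⟩

@[ext]
theorem ext {u v : UT R N} (h : (u : Matrix (Fin N) (Fin N) R) = v) : u = v :=
  Subtype.ext (Units.ext h)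

@[simp, norm_cast]
theorem coe_mul (u v : UT R N) : ((u * v : UT R N) : Matrix (Fin N) (Fin N) R) = u * v := rfl

@[simp, norm_cast]
theorem coe_one : ((1 : UT R N) : Matrix (Fin N) (Fin N) R) = 1 := rfl

@[simp, norm_cast]
theorem coe_pow (u : UT R N) (k : ℕ) :
    ((u ^ k : UT R N) : Matrix (Fin N) (Fin N) R) = u ^ k := by
  rw [SubgroupClass.coe_pow, Units.val_pow_eq_pow_val]

theorem isSupportedAbove_sub_one (u : UT R N) :
    IsSupportedAbove 1 ((u : Matrix (Fin N) (Fin N) R) - 1) := by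
  intro i j hij
  rcases (Nat.lt_succ_iff.mp hij).lt_or_eq with h | h
  · rw [Matrix.sub_apply, u.2.1 h, one_apply_ne (by rintro rfl; omega), sub_zero]
  · rw [Fin.ext h, Matrix.sub_apply, u.2.2, one_apply_eq, sub_self]

theorem coe_mul_sub_one (u v : UT R N) :
    ((u * v : UT R N) : Matrix (Fin N) (Fin N) R) - 1 =
      (u - 1) + (v - 1) + (u - 1) * (v - 1) := by
  rw [coe_mul]; noncomm_ring

variable {d : ℕ} {u v : UT R N}

theorem isSupportedAbove_mul_sub_one (hd : 1 ≤ d)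
    (hu : IsSupportedAbove d ((u : Matrix (Fin N) (Fin N) R) - 1))
    (hv : IsSupportedAbove d ((v : Matrix (Fin N) (Fin N) R) - 1)) :
    IsSupportedAbove d (((u * v : UT R N) : Matrix (Fin N) (Fin N) R) - 1) := by
  rw [coe_mul_sub_one]
  exact (hu.add hv).add ((hu.mul hv).mono (by omega))

theorem mul_sub_one_apply (hd : 1 ≤ d)
    (hu : IsSupportedAbove d ((u : Matrix (Fin N) (Fin N) R) - 1))
    (hv : IsSupportedAbove d ((v : Matrix (Fin N) (Fin N) R) - 1))
    {i j : Fin N} (hij : (j : ℕ) = i + d) :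
    (((u * v : UT R N) : Matrix (Fin N) (Fin N) R) - 1) i j =
      ((u : Matrix (Fin N) (Fin N) R) - 1) i j + ((v : Matrix (Fin N) (Fin N) R) - 1) i j := by
  rw [coe_mul_sub_one, Matrix.add_apply, Matrix.add_apply, hu.mul hv i j (by omega), add_zero]

def transvection {i j : Fin N} (hij : i < j) (c : R) : UT R N :=
  ⟨⟨Matrix.transvection i j c, Matrix.transvection i j (-c),
    by rw [transvection_mul_transvection_same _ _ hij.ne, add_neg_cancel, transvection_zero],
    by rw [transvection_mul_transvection_same _ _ hij.ne, neg_add_cancel, transvection_zero]⟩,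
    blockTriangular_transvection hij.le c,
    fun k => by
      change (1 + single i j c : Matrix (Fin N) (Fin N) R) k k = 1
      rw [Matrix.add_apply, one_apply_eq,
        single_apply_of_ne _ _ _ _ _ fun h => hij.ne (h.1.trans h.2.symm), add_zero]⟩

section transvection

variable {i j k : Fin N} (hij : i < j)

theorem coe_transvection_sub_one (c : R) :
    ((transvection hij c : UT R N) : Matrix (Fin N) (Fin N) R) - 1 = single i j c :=
  add_sub_cancel_left 1 _

theorem isSupportedAbove_transvection_sub_one {d : ℕ} (hd : (i : ℕ) + d ≤ j) (c : R) :
    IsSupportedAbove d (((transvection hij c : UT R N) : Matrix (Fin N) (Fin N) R) - 1) := by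
  rw [coe_transvection_sub_one]
  exact isSupportedAbove_single hd c

theorem coe_transvection (c : R) :
    ((transvection hij c : UT R N) : Matrix (Fin N) (Fin N) R) = Matrix.transvection i j c := rfl

theorem transvection_zero : transvection hij (0 : R) = 1 :=
  ext (Matrix.transvection_zero i j)

theorem transvection_mul_transvection (a b : R) :
    transvection hij a * transvection hij b = transvection hij (a + b) :=
  ext (transvection_mul_transvection_same _ _ hij.ne a b)

theorem transvection_pow (c : R) (n : ℕ) : transvection hij c ^ n = transvection hij (n * c) := by
  induction n with
  | zero => rw [pow_zero, Nat.cast_zero, zero_mul, transvection_zero]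
  | succ n ih => rw [pow_succ, ih, transvection_mul_transvection, Nat.cast_succ, add_one_mul]

theorem inv_transvection (c : R) : (transvection hij c)⁻¹ = transvection hij (-c) :=
  inv_eq_of_mul_eq_one_right <| by
    rw [transvection_mul_transvection, add_neg_cancel, transvection_zero]

theorem commutatorElement_transvection (hik : i < k) (hkj : k < j) (c : R) :
    ⁅transvection hik (1 : R), transvection hkj c⁆ = transvection (hik.trans hkj) c := by
  rw [commutatorElement_def, inv_transvection, inv_transvection]
  ext1
  simp only [Subgroup.coe_mul, Units.val_mul, coe_transvection, Matrix.transvection, mul_add,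
    add_mul, mul_one, one_mul, mul_neg, neg_mul, neg_neg, add_zero, single_mul_single_same,
    single_mul_single_of_ne, ne_eq, hik.ne', hkj.ne', (hik.trans hkj).ne', not_false_eq_true]
  simp only [← single_neg]
  abel

end transvection

theorem transvection_mul_sub_one_apply (hd : 1 ≤ d)
    (hu : IsSupportedAbove d ((u : Matrix (Fin N) (Fin N) R) - 1))
    {i j : Fin N} (hij : i < j) (hj : (j : ℕ) = i + d) {a b : Fin N} (hb : (b : ℕ) = a + d) :
    (((transvection hij (-((u : Matrix (Fin N) (Fin N) R) - 1) i j) * u : UT R N) :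
        Matrix (Fin N) (Fin N) R) - 1) a b =
      if a = i then 0 else ((u : Matrix (Fin N) (Fin N) R) - 1) a b := by
  rw [mul_sub_one_apply hd (isSupportedAbove_transvection_sub_one hij hj.ge _) hu hb,
    coe_transvection_sub_one]
  by_cases ha : a = i
  · obtain rfl := ha
    obtain rfl : b = j := Fin.ext (hb.trans hj.symm)
    rw [single_apply_same, neg_add_cancel, if_pos rfl]
  · rw [single_apply_of_ne _ _ _ _ _ fun h => ha h.1.symm, zero_add, if_neg ha]

variable {K : Subgroup (UT R N)}

/-- Multiplying by transvections on the `d`-th superdiagonal clears that diagonal one entry at a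
time; what is left is supported above `d + 1`. -/
theorem mem_of_isSupportedAbove_of_transvection_mem (hd : 1 ≤ d) (I : AddSubgroup R)
    (hnext : ∀ u : UT R N, IsSupportedAbove (d + 1) ((u : Matrix (Fin N) (Fin N) R) - 1) → u ∈ K)
    (htrans : ∀ (i j : Fin N) (hij : i < j), (j : ℕ) = i + d → ∀ c ∈ I, transvection hij c ∈ K)
    (hu : IsSupportedAbove d ((u : Matrix (Fin N) (Fin N) R) - 1))
    (hI : ∀ i j : Fin N, (j : ℕ) = i + d → ((u : Matrix (Fin N) (Fin N) R) - 1) i j ∈ I) :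
    u ∈ K := by
  suffices ∀ t : ℕ, ∀ u : UT R N, IsSupportedAbove d ((u : Matrix (Fin N) (Fin N) R) - 1) →
      (∀ i j : Fin N, (j : ℕ) = i + d → ((u : Matrix (Fin N) (Fin N) R) - 1) i j ∈ I) →
      (∀ i j : Fin N, (j : ℕ) = i + d → t ≤ i → ((u : Matrix (Fin N) (Fin N) R) - 1) i j = 0) →
      u ∈ K from
    this N u hu hI fun i _ _ hi => absurd i.isLt (by omega)
  intro t
  induction t with
  | zero =>
    intro u hu _ hzero
    refine hnext u fun i j hij => ?_
    rcases (Nat.lt_succ_iff.mp hij).lt_or_eq with h | h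
    · exact hu i j h
    · exact hzero i j h (Nat.zero_le _)
  | succ t ih =>
    intro u hu hI hzero
    by_cases ht : ∃ i j : Fin N, (i : ℕ) = t ∧ (j : ℕ) = i + d
    swap
    · refine ih u hu hI fun i j hij hti => hzero i j hij ?_
      rcases hti.lt_or_eq with h | h
      · exact h
      · exact absurd ⟨i, j, h.symm, hij⟩ ht
    obtain ⟨i, j, rfl, hj⟩ := ht
    have hij : i < j := Fin.lt_def.mpr (by omega)
    have hτ := htrans i j hij hj _ (I.neg_mem (hI i j hj))
    have hv : IsSupportedAbove d
        (((transvection hij (-((u : Matrix (Fin N) (Fin N) R) - 1) i j) * u : UT R N) :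
          Matrix (Fin N) (Fin N) R) - 1) :=
      isSupportedAbove_mul_sub_one hd (isSupportedAbove_transvection_sub_one hij hj.ge _) hu
    have hvK := ih _ hv (fun a b hb => ?_) fun a b hb ha => ?_
    · exact (K.mul_mem_cancel_left hτ).mp hvK
    · rw [transvection_mul_sub_one_apply hd hu hij hj hb]
      split_ifs
      exacts [I.zero_mem, hI a b hb]
    · rw [transvection_mul_sub_one_apply hd hu hij hj hb]
      split_ifs with ha'
      · rfl
      · exact hzero a b hb (lt_of_le_of_ne ha fun h => ha' (Fin.ext h.symm))

theorem mem_of_isSupportedAbove_of_commutator_le (hK : commutator (UT R N) ≤ K) (hd : 2 ≤ d)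
    (hu : IsSupportedAbove d ((u : Matrix (Fin N) (Fin N) R) - 1)) : u ∈ K := by
  obtain ⟨k, hk⟩ : ∃ k, N ≤ d + k := ⟨N, by omega⟩
  induction k generalizing d u with
  | zero =>
    obtain rfl : u = 1 := ext (sub_eq_zero.mp (hu.eq_zero (by omega)))
    exact K.one_mem
  | succ k ih =>
    refine mem_of_isSupportedAbove_of_transvection_mem (by omega) ⊤
      (fun v hv => ih (by omega) hv (by omega)) (fun i j hij hj c _ => ?_) hu fun _ _ _ => trivial
    have hik : i < ⟨i + 1, by omega⟩ := Fin.lt_def.mpr i.val.lt_succ_self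
    have hkj : (⟨i + 1, by omega⟩ : Fin N) < j := Fin.lt_def.mpr (show (i : ℕ) + 1 < j by omega)
    rw [← commutatorElement_transvection hik hkj]
    exact hK (Subgroup.commutator_mem_commutator (Subgroup.mem_top _) (Subgroup.mem_top _))

theorem UTentry_eq_sub_one_apply (u : UT R N) {i j : Fin N} (hij : i ≠ j) :
    UTentry u i j = ((u : Matrix (Fin N) (Fin N) R) - 1) i j := by
  rw [Matrix.sub_apply, one_apply_ne hij, sub_zero]; rfl

theorem mem_of_superdiag_mem_span {n q : ℕ} {K : Subgroup (UT R (n + 1))}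
    (hK : commutator (UT R (n + 1)) ≤ K) (hpow : ∀ v : UT R (n + 1), v ^ q ∈ K)
    {u : UT R (n + 1)} (hu : ∀ i : Fin n, UTentry u i.castSucc i.succ ∈ Ideal.span {(q : R)}) :
    u ∈ K := by
  refine mem_of_isSupportedAbove_of_transvection_mem le_rfl (Ideal.span {(q : R)}).toAddSubgroup
    (fun v hv => mem_of_isSupportedAbove_of_commutator_le hK le_rfl hv) (fun i j hij _ c hc => ?_)
    (isSupportedAbove_sub_one u) fun i j hij => ?_
  · obtain ⟨a, rfl⟩ := Ideal.mem_span_singleton'.mp hc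
    rw [mul_comm, ← transvection_pow]
    exact hpow _
  · obtain ⟨i', rfl, rfl⟩ : ∃ i' : Fin n, i'.castSucc = i ∧ i'.succ = j :=
      ⟨⟨i, by omega⟩, rfl, Fin.ext (by simp [hij])⟩
    rw [← UTentry_eq_sub_one_apply _ (Fin.castSucc_lt_succ (i := i')).ne]
    exact hu i'

def superdiagHom {S : Type*} [CommRing S] (f : R →+* S) (n : ℕ) :
    UT R (n + 1) →* Multiplicative (Fin n → S) where
  toFun u := Multiplicative.ofAdd fun i => f (UTentry u i.castSucc i.succ)
  map_one' := by
    rw [← ofAdd_zero]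
    congr 1
    funext i
    rw [UTentry_eq_sub_one_apply _ (Fin.castSucc_lt_succ (i := i)).ne, coe_one, sub_self,
      Matrix.zero_apply, map_zero, Pi.zero_apply]
  map_mul' u v := by
    rw [← ofAdd_add]
    congr 1
    funext i
    have hne := (Fin.castSucc_lt_succ (i := i)).ne
    rw [Pi.add_apply, ← map_add, UTentry_eq_sub_one_apply _ hne, UTentry_eq_sub_one_apply _ hne,
      UTentry_eq_sub_one_apply _ hne, mul_sub_one_apply le_rfl (isSupportedAbove_sub_one u)
      (isSupportedAbove_sub_one v) (by simp)]

theorem isPGroup {p m : ℕ} (hp : p.Prime) (hR : ((p ^ m : ℕ) : R) = 0) : IsPGroup p (UT R N) := by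
  intro u
  refine ⟨m + N, ext ?_⟩
  rw [coe_pow, coe_one, ← add_sub_cancel (1 : Matrix (Fin N) (Fin N) R) u]
  refine one_add_pow_prime_pow_eq_one hp ?_ (((isSupportedAbove_sub_one u).pow N).eq_zero (by simp))
  rw [← map_natCast (scalar (Fin N)), hR, map_zero]

theorem ker_superdiagHom_le_frattini [Finite R] {S : Type*} [CommRing S]
    {p m n : ℕ} [Fact p.Prime] (hR : ((p ^ m : ℕ) : R) = 0) (f : R →+* S)
    (hf : RingHom.ker f ≤ Ideal.span {(p : R)}) :
    (superdiagHom f n).ker ≤ frattini (UT R (n + 1)) := by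
  intro u hu
  have hG : IsPGroup p (UT R (n + 1)) := isPGroup Fact.out hR
  simp only [frattini, Order.radical, Subgroup.mem_iInf]
  intro M hM
  refine mem_of_superdiag_mem_span (hG.commutator_le_of_isCoatom hM) (hG.pow_mem_of_isCoatom hM)
    fun i => hf (congrFun (Multiplicative.ofAdd.injective hu) i)

end UT

theorem lifting_of_surjective_theta_is_surjective_general (p m n : ℕ) [Fact p.Prime]
    (hm : 1 ≤ m) {Γ : Type*} [Group Γ]
    (θ : Γ → (Fin n → ZMod p))
    (hθsurj : Function.Surjective θ)
    (ρ : Γ →* UT (ZMod (p ^ m)) (n + 1))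
    (hcomp : ∀ g i, ZMod.castHom (dvd_pow_self p (Nat.one_le_iff_ne_zero.mp hm)) (ZMod p)
      (UTentry (ρ g) i.castSucc i.succ) = θ g i) :
    Function.Surjective ρ := by
  have : NeZero (p ^ m) := ⟨pow_ne_zero m (Fact.out : p.Prime).ne_zero⟩
  have hpm : p ∣ p ^ m := dvd_pow_self p (by omega)
  let φ := UT.superdiagHom (ZMod.castHom hpm (ZMod p)) n
  have hφρ : ⇑φ ∘ ⇑ρ = Multiplicative.ofAdd ∘ θ :=
    funext fun γ => congrArg Multiplicative.ofAdd (funext (hcomp γ))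
  refine φ.surjective_of_ker_le_frattini ρ ?_ ?_
  · exact UT.ker_superdiagHom_le_frattini (ZMod.natCast_self _) _ (ZMod.ker_castHom_le_span hpm)
  · rw [hφρ]
    exact Multiplicative.ofAdd.surjective.comp hθsurj

/-- if `θ : Γ → (𝔽_p)^n` is a surjective homomorphism from a finite `p`-group
and `ρ : Γ → U_{n+1}(ℤ/p^m)` satisfies `φ_m ∘ ρ = θ`, then `ρ` is surjective. -/
theorem lifting_of_surjective_theta_is_surjective (p m n : ℕ) [Fact p.Prime]
    (hm : 1 ≤ m) (hn : 1 ≤ n) {Γ : Type*} [Group Γ] [Finite Γ] (hΓ : IsPGroup p Γ)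
    (θ : Γ → (Fin n → ZMod p)) (hθhom : ∀ a b, θ (a * b) = θ a + θ b)
    (hθsurj : Function.Surjective θ)
    (ρ : Γ →* UT (ZMod (p ^ m)) (n + 1))
    (hcomp : ∀ g i, ZMod.castHom (dvd_pow_self p (Nat.one_le_iff_ne_zero.mp hm)) (ZMod p)
      (UTentry (ρ g) i.castSucc i.succ) = θ g i) :
    Function.Surjective ρ :=
  lifting_of_surjective_theta_is_surjective_general p m n hm θ hθsurj ρ hcomp
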